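/- arXiv:0806.1079 — 3 statements merged into one kernel-verified Lean document; each statement's English description precedes it below -/
import Mathlib

section
/- In a strict bicategory B, let f : a ⟶ b, f' : a' ⟶ b', f'' : a'' ⟶ b'' be 1-morphisms; let s₁ : a ⟶ a', s̄₁ : a' ⟶ a, t₁ : b ⟶ b', t̄₁ : b' ⟶ b and s₂ : a' ⟶ a'', s̄₂ : a'' ⟶ a', t₂ : b' ⟶ b'', t̄₂ : b'' ⟶ b' satisfy the strict inverse equations (s₁ ≫ s̄₁ = 𝟙 a, s̄₁ ≫ s₁ = 𝟙 a', and similarly for t₁, s₂, t₂); and let κ₁ : f ≫ t₁ ⟶ s₁ ≫ f' and κ₂ : f' ≫ t₂ ⟶ s₂ ≫ f'' be invertible 2-morphisms. Define the pasted square κ₁₂ := (κ₁ ▷ t₂) ≫ (s₁ ◁ κ₂), which by strictness is an invertible 2-morphism f ≫ (t₁ ≫ t₂) ⟶ (s₁ ≫ s₂) ≫ f''. Then the transfer maps compose: r_{κ₁₂} = r_{κ₂} ∘ r_{κ₁} as maps End(f) → End(f''), where r_{κ₁₂} is formed using the strict inverses s̄₂ ≫ s̄₁ and t̄₂ ≫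 t̄₁. -/
open CategoryTheory Bicategory

/-- The transfer map `r_κ : End(f) → End(f')` induced by an equivalence square
`κ : f ≫ t ⟶ s ≫ f'` with a strict inverse `sb` of `s`:
`r_κ(η) := (sb ◁ κ)⁻¹ ≫ (sb ◁ (η ▷ t)) ≫ (sb ◁ κ)`, where the strict identification
`sb ≫ s ≫ f' = f'` is implemented by `eqToHom e`. -/
noncomputable def transferMap {B : Type*} [Bicategory B] [Bicategory.Strict B] {a b a' b' : B}
    {f : a ⟶ b} {f' : a' ⟶ b'} (s : a ⟶ a') (sb : a' ⟶ a) (t : b ⟶ b')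
    (κ : f ≫ t ⟶ s ≫ f') [IsIso κ] (e : sb ≫ s ≫ f' = f') (η : f ⟶ f) : f' ⟶ f' :=
  eqToHom e.symm ≫ inv (sb ◁ κ) ≫ (sb ◁ (η ▷ t)) ≫ (sb ◁ κ) ≫ eqToHom e

/-!
The transfer map `r_κ` is conjugation by the isomorphism `sb ◁ κ : sb ≫ f ≫ t ≅ f'`. For the
pasted square this isomorphism factors, up to strictness identifications, as `sb₂ ◁ (ψ₁ ▷ t₂)`
followed by `ψ₂`, where `ψᵢ = sbᵢ ◁ κᵢ`: the factor `sb₁ ◁ s₁ ◁ κ₂` collapses to `κ₂` because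
`sb₁ ≫ s₁ = 𝟙`. Conjugation by a composite is the composite of the conjugations, and
conjugation commutes with whiskering.
-/

namespace CategoryTheory.Bicategory

section Conj

variable {B : Type*} [Bicategory B] {a b c : B}

theorem whiskerLeftIso_conj (g : a ⟶ b) {x y : b ⟶ c} (α : x ≅ y) (θ : x ⟶ x) :
    (whiskerLeftIso g α).conj (g ◁ θ) = g ◁ α.conj θ := by
  simp [Iso.conj_apply]

theorem whiskerRightIso_conj {x y : a ⟶ b} (α : x ≅ y) (h : b ⟶ c) (θ : x ⟶ x) :
    (whiskerRightIso α h).conj (θ ▷ h) = α.conj θ ▷ h := by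
  simp [Iso.conj_apply]

end Conj

variable {B : Type*} [Bicategory B] [Bicategory.Strict B]

theorem whiskerLeft_whiskerLeft_of_comp_eq_id {a b c : B} {s : a ⟶ b} {sb : b ⟶ a}
    (h : sb ≫ s = 𝟙 b) {x y : b ⟶ c} (κ : x ⟶ y) :
    sb ◁ s ◁ κ = eqToHom (by rw [← Category.assoc, h, Category.id_comp]) ≫ κ ≫
      eqToHom (by rw [← Category.assoc, h, Category.id_comp]) := by
  have hcomp : ∀ (g : b ⟶ b) (hg : g = 𝟙 b),
      g ◁ κ = eqToHom (by rw [hg, Category.id_comp]) ≫ κ ≫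
        eqToHom (by rw [hg, Category.id_comp]) := by
    rintro _ rfl
    simp [Strict.leftUnitor_eqToIso]
  have := hcomp _ h
  simp only [comp_whiskerLeft, Strict.associator_eqToIso, eqToIso.hom, eqToIso.inv,
    eqToHom_comp_iff, comp_eqToHom_iff] at this
  simpa using this

theorem eqToIso_conj_comp_whiskerLeft_whiskerRight_comp {a a' a'' b b' b'' : B}
    (g : a'' ⟶ a') (h : a' ⟶ a) {f : a ⟶ b} (η : f ⟶ f) (t₁ : b ⟶ b') (t₂ : b' ⟶ b'')
    (p : (g ≫ h) ≫ f ≫ t₁ ≫ t₂ = g ≫ (h ≫ f ≫ t₁) ≫ t₂) :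
    (eqToIso p).conj ((g ≫ h) ◁ η ▷ (t₁ ≫ t₂)) = g ◁ (h ◁ η ▷ t₁) ▷ t₂ := by
  simp [Iso.conj_apply, comp_whiskerLeft, whiskerRight_comp, Strict.associator_eqToIso]

section Transfer

variable {a b a' b' : B} {f : a ⟶ b} {f' : a' ⟶ b'}

noncomputable def transferIso (s : a ⟶ a') (sb : a' ⟶ a) (t : b ⟶ b') (κ : f ≫ t ⟶ s ≫ f')
    [IsIso κ] (e : sb ≫ s ≫ f' = f') : sb ≫ f ≫ t ≅ f' :=
  whiskerLeftIso sb (asIso κ) ≪≫ eqToIso e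

theorem transferMap_eq_conj (s : a ⟶ a') (sb : a' ⟶ a) (t : b ⟶ b') (κ : f ≫ t ⟶ s ≫ f')
    [IsIso κ] (e : sb ≫ s ≫ f' = f') (η : f ⟶ f) :
    transferMap s sb t κ e η = (transferIso s sb t κ e).conj (sb ◁ η ▷ t) := by
  simp [transferMap, transferIso, Iso.conj_apply]

end Transfer

theorem transferIso_paste {a b a' b' a'' b'' : B} {f : a ⟶ b} {f' : a' ⟶ b'} {f'' : a'' ⟶ b''}
    {s₁ : a ⟶ a'} {sb₁ : a' ⟶ a} (t₁ : b ⟶ b') {s₂ : a' ⟶ a''} (sb₂ : a'' ⟶ a') (t₂ : b' ⟶ b'')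
    (hs₁ : sb₁ ≫ s₁ = 𝟙 a')
    (κ₁ : f ≫ t₁ ⟶ s₁ ≫ f') [IsIso κ₁] (κ₂ : f' ≫ t₂ ⟶ s₂ ≫ f'') [IsIso κ₂]
    (eA : f ≫ t₁ ≫ t₂ = (f ≫ t₁) ≫ t₂) (eB : s₁ ≫ f' ≫ t₂ = (s₁ ≫ f') ≫ t₂)
    (eC : s₁ ≫ s₂ ≫ f'' = (s₁ ≫ s₂) ≫ f'') (e₁ : sb₁ ≫ s₁ ≫ f' = f') (e₂ : sb₂ ≫ s₂ ≫ f'' = f'')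
    (e₁₂ : (sb₂ ≫ sb₁) ≫ (s₁ ≫ s₂) ≫ f'' = f'') :
    transferIso (s₁ ≫ s₂) (sb₂ ≫ sb₁) (t₁ ≫ t₂)
        (eqToHom eA ≫ κ₁ ▷ t₂ ≫ eqToHom eB.symm ≫ s₁ ◁ κ₂ ≫ eqToHom eC) e₁₂ =
      eqToIso (by simp) ≪≫ whiskerLeftIso sb₂ (whiskerRightIso (transferIso s₁ sb₁ t₁ κ₁ e₁) t₂) ≪≫
        transferIso s₂ sb₂ t₂ κ₂ e₂ := by
  ext
  simp [transferIso, comp_whiskerLeft, Strict.associator_eqToIso,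
    whiskerLeft_whiskerLeft_of_comp_eq_id hs₁]

end CategoryTheory.Bicategory

theorem transferMap_comp_general {B : Type*} [Bicategory B] [Bicategory.Strict B]
    {a b a' b' a'' b'' : B} (f : a ⟶ b) (f' : a' ⟶ b') (f'' : a'' ⟶ b'')
    (s₁ : a ⟶ a') (sb₁ : a' ⟶ a) (t₁ : b ⟶ b')
    (s₂ : a' ⟶ a'') (sb₂ : a'' ⟶ a') (t₂ : b' ⟶ b'')
    (hs₁' : sb₁ ≫ s₁ = 𝟙 a')
    (κ₁ : f ≫ t₁ ⟶ s₁ ≫ f') [IsIso κ₁]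
    (κ₂ : f' ≫ t₂ ⟶ s₂ ≫ f'') [IsIso κ₂]
    (eA : f ≫ t₁ ≫ t₂ = (f ≫ t₁) ≫ t₂)
    (eB : s₁ ≫ f' ≫ t₂ = (s₁ ≫ f') ≫ t₂)
    (eC : s₁ ≫ s₂ ≫ f'' = (s₁ ≫ s₂) ≫ f'')
    (e₁ : sb₁ ≫ s₁ ≫ f' = f')
    (e₂ : sb₂ ≫ s₂ ≫ f'' = f'')
    (e₁₂ : (sb₂ ≫ sb₁) ≫ (s₁ ≫ s₂) ≫ f'' = f'') :
    ∀ η : f ⟶ f,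
      transferMap (s₁ ≫ s₂) (sb₂ ≫ sb₁) (t₁ ≫ t₂)
        (eqToHom eA ≫ (κ₁ ▷ t₂) ≫ eqToHom eB.symm ≫ (s₁ ◁ κ₂) ≫ eqToHom eC) e₁₂ η =
      transferMap s₂ sb₂ t₂ κ₂ e₂ (transferMap s₁ sb₁ t₁ κ₁ e₁ η) := by
  intro η
  rw [transferMap_eq_conj, transferIso_paste t₁ sb₂ t₂ hs₁' κ₁ κ₂ eA eB, Iso.trans_conj,
    Iso.trans_conj, eqToIso_conj_comp_whiskerLeft_whiskerRight_comp, whiskerLeftIso_conj,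
    whiskerRightIso_conj, transferMap_eq_conj, transferMap_eq_conj]

/-- Transfer maps compose: for strictly invertible 1-morphism pairs
`(s₁, sb₁), (t₁, tb₁), (s₂, sb₂), (t₂, tb₂)` and invertible squares `κ₁ : f ≫ t₁ ⟶ s₁ ≫ f'`
and `κ₂ : f' ≫ t₂ ⟶ s₂ ≫ f''`, the transfer along the pasted square
`κ₁₂ = (κ₁ ▷ t₂) ≫ (s₁ ◁ κ₂) : f ≫ (t₁ ≫ t₂) ⟶ (s₁ ≫ s₂) ≫ f''`
(strictness identifications via `eqToHom`), formed with strict inverses `sb₂ ≫ sb₁` and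
`tb₂ ≫ tb₁`, equals the composite `r_{κ₂} ∘ r_{κ₁} : End(f) → End(f'')`. -/
theorem transferMap_comp {B : Type*} [Bicategory B] [Bicategory.Strict B]
    {a b a' b' a'' b'' : B} (f : a ⟶ b) (f' : a' ⟶ b') (f'' : a'' ⟶ b'')
    (s₁ : a ⟶ a') (sb₁ : a' ⟶ a) (t₁ : b ⟶ b') (tb₁ : b' ⟶ b)
    (s₂ : a' ⟶ a'') (sb₂ : a'' ⟶ a') (t₂ : b' ⟶ b'') (tb₂ : b'' ⟶ b')
    (hs₁ : s₁ ≫ sb₁ = 𝟙 a) (hs₁' : sb₁ ≫ s₁ = 𝟙 a')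
    (ht₁ : t₁ ≫ tb₁ = 𝟙 b) (ht₁' : tb₁ ≫ t₁ = 𝟙 b')
    (hs₂ : s₂ ≫ sb₂ = 𝟙 a') (hs₂' : sb₂ ≫ s₂ = 𝟙 a'')
    (ht₂ : t₂ ≫ tb₂ = 𝟙 b') (ht₂' : tb₂ ≫ t₂ = 𝟙 b'')
    (κ₁ : f ≫ t₁ ⟶ s₁ ≫ f') [IsIso κ₁]
    (κ₂ : f' ≫ t₂ ⟶ s₂ ≫ f'') [IsIso κ₂]
    (eA : f ≫ t₁ ≫ t₂ = (f ≫ t₁) ≫ t₂)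
    (eB : s₁ ≫ f' ≫ t₂ = (s₁ ≫ f') ≫ t₂)
    (eC : s₁ ≫ s₂ ≫ f'' = (s₁ ≫ s₂) ≫ f'')
    (e₁ : sb₁ ≫ s₁ ≫ f' = f')
    (e₂ : sb₂ ≫ s₂ ≫ f'' = f'')
    (e₁₂ : (sb₂ ≫ sb₁) ≫ (s₁ ≫ s₂) ≫ f'' = f'') :
    ∀ η : f ⟶ f,
      transferMap (s₁ ≫ s₂) (sb₂ ≫ sb₁) (t₁ ≫ t₂)
        (eqToHom eA ≫ (κ₁ ▷ t₂) ≫ eqToHom eB.symm ≫ (s₁ ◁ κ₂) ≫ eqToHom eC) e₁₂ η =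
      transferMap s₂ sb₂ t₂ κ₂ e₂ (transferMap s₁ sb₁ t₁ κ₁ e₁ η) :=
  transferMap_comp_general f f' f'' s₁ sb₁ t₁ s₂ sb₂ t₂ hs₁' κ₁ κ₂ eA eB eC e₁ e₂ e₁₂
end

section
/- Work in lightcone coordinates on 2-dimensional Minkowski space, so that two points p, q ∈ ℝ × ℝ are spacelike separated exactly when (q.1 − p.1) * (q.2 − p.2) < 0. Let O = Set.Ioo a₁ b₁ ×ˢ Set.Ioo a₂ b₂ and O' = Set.Ioo a₁' b₁' ×ˢ Set.Ioo a₂' b₂' be two nonempty open boxes (a₁ < b₁, a₂ < b₂, a₁' < b₁', a₂' < b₂'). Then every point of O is spacelike separated from every point of O' if and only if (b₁ ≤ a₁' and b₂' ≤ a₂) or (b₁' ≤ a₁ and b₂ ≤ a₂'). -/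
/-!
If the boxes shared a value `x` of the first lightcone coordinate, the points `(x, y) ∈ O` and
`(x, y') ∈ O'` would give the product `0`; so the first-coordinate intervals are disjoint, one lying
to the left of the other. Comparing a point of `O` with a point of `O'` then fixes the sign of
`q.1 - p.1`, which forces `q.2 < p.2` for all second coordinates, and for open intervals this means
the corresponding endpoints are ordered the opposite way.
-/

open Set

section Intervals

variable {α : Type*} [LinearOrder α] [DenselyOrdered α] {a b c d : α}

theorem Ioo_disjoint_Ioo_iff_le_or_le (hab : a < b) (hcd : c < d) :
    Disjoint (Ioo a b) (Ioo c d) ↔ b ≤ c ∨ d ≤ a := by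
  rw [Ioo_disjoint_Ioo, min_le_iff, le_max_iff, le_max_iff]
  have := hab.not_ge
  have := hcd.not_ge
  tauto

theorem forall_mem_Ioo_forall_mem_Ioo_lt_iff (hab : a < b) (hcd : c < d) :
    (∀ x ∈ Ioo a b, ∀ y ∈ Ioo c d, y < x) ↔ d ≤ a := by
  refine ⟨fun h ↦ ?_, fun h x hx y hy ↦ (hy.2.trans_le h).trans hx.1⟩
  have hdisj : Disjoint (Ioo a b) (Ioo c d) :=
    disjoint_left.2 fun x hx hx' ↦ (h x hx x hx').false
  refine ((Ioo_disjoint_Ioo_iff_le_or_le hab hcd).1 hdisj).resolve_left fun hbc ↦ ?_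
  obtain ⟨x, hx⟩ := nonempty_Ioo.2 hab
  obtain ⟨y, hy⟩ := nonempty_Ioo.2 hcd
  exact (h x hx y hy).not_gt ((hx.2.trans_le hbc).trans hy.1)

end Intervals

def SpacelikeSeparated (s t : Set (ℝ × ℝ)) : Prop :=
  ∀ p ∈ s, ∀ q ∈ t, (q.1 - p.1) * (q.2 - p.2) < 0

namespace SpacelikeSeparated

variable {s t : Set (ℝ × ℝ)} {A B A' B' : Set ℝ}

theorem symm (h : SpacelikeSeparated s t) : SpacelikeSeparated t s := fun q hq p hp ↦ by
  simpa only [← neg_sub p.1, ← neg_sub p.2, neg_mul_neg] using h p hp q hq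

theorem disjoint_fst (h : SpacelikeSeparated (A ×ˢ B) (A' ×ˢ B')) (hB : B.Nonempty)
    (hB' : B'.Nonempty) : Disjoint A A' := by
  obtain ⟨y, hy⟩ := hB
  obtain ⟨y', hy'⟩ := hB'
  refine disjoint_left.2 fun x hx hx' ↦ ?_
  simpa using h (x, y) ⟨hx, hy⟩ (x, y') ⟨hx', hy'⟩

theorem snd_lt_of_fst_lt (h : SpacelikeSeparated (A ×ˢ B) (A' ×ˢ B')) {x x' : ℝ} (hx : x ∈ A)
    (hx' : x' ∈ A') (hlt : x < x') : ∀ y ∈ B, ∀ y' ∈ B', y' < y := fun y hy y' hy' ↦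
  sub_neg.1 <| neg_of_mul_neg_right (h (x, y) ⟨hx, hy⟩ (x', y') ⟨hx', hy'⟩) (sub_pos.2 hlt).le

theorem of_le {a₁ b₁ a₂ b₂ a₁' b₁' a₂' b₂' : ℝ} (h₁ : b₁ ≤ a₁') (h₂ : b₂' ≤ a₂) :
    SpacelikeSeparated (Ioo a₁ b₁ ×ˢ Ioo a₂ b₂) (Ioo a₁' b₁' ×ˢ Ioo a₂' b₂') :=
  fun _ ⟨hp₁, hp₂⟩ _ ⟨hq₁, hq₂⟩ ↦ mul_neg_of_pos_of_neg
    (sub_pos.2 <| (hp₁.2.trans_le h₁).trans hq₁.1) (sub_neg.2 <| (hq₂.2.trans_le h₂).trans hp₂.1)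

theorem snd_le_of_fst_le {a₁ b₁ a₂ b₂ a₁' b₁' a₂' b₂' : ℝ}
    (h : SpacelikeSeparated (Ioo a₁ b₁ ×ˢ Ioo a₂ b₂) (Ioo a₁' b₁' ×ˢ Ioo a₂' b₂'))
    (h₁ : a₁ < b₁) (h₂ : a₂ < b₂) (h₁' : a₁' < b₁') (h₂' : a₂' < b₂') (hb : b₁ ≤ a₁') :
    b₂' ≤ a₂ := by
  obtain ⟨x, hx⟩ := nonempty_Ioo.2 h₁
  obtain ⟨x', hx'⟩ := nonempty_Ioo.2 h₁'
  exact (forall_mem_Ioo_forall_mem_Ioo_lt_iff h₂ h₂').1 <|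
    h.snd_lt_of_fst_lt hx hx' ((hx.2.trans_le hb).trans hx'.1)

end SpacelikeSeparated

/-- In lightcone coordinates (where two points `p, q` are spacelike
separated iff `(q.1 − p.1) * (q.2 − p.2) < 0`), two nonempty open boxes
`O = Ioo a₁ b₁ ×ˢ Ioo a₂ b₂` and `O' = Ioo a₁' b₁' ×ˢ Ioo a₂' b₂'` are pointwise spacelike
separated iff `(b₁ ≤ a₁' ∧ b₂' ≤ a₂) ∨ (b₁' ≤ a₁ ∧ b₂ ≤ a₂')`. -/
theorem spacelike_separated_boxes
    (a₁ b₁ a₂ b₂ a₁' b₁' a₂' b₂' : ℝ)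
    (h₁ : a₁ < b₁) (h₂ : a₂ < b₂) (h₁' : a₁' < b₁') (h₂' : a₂' < b₂') :
    (∀ p ∈ Set.Ioo a₁ b₁ ×ˢ Set.Ioo a₂ b₂,
      ∀ q ∈ Set.Ioo a₁' b₁' ×ˢ Set.Ioo a₂' b₂',
        (q.1 - p.1) * (q.2 - p.2) < 0) ↔
      ((b₁ ≤ a₁' ∧ b₂' ≤ a₂) ∨ (b₁' ≤ a₁ ∧ b₂ ≤ a₂')) := by
  change SpacelikeSeparated _ _ ↔ _
  constructor
  · intro h
    have hdisj := h.disjoint_fst (nonempty_Ioo.2 h₂) (nonempty_Ioo.2 h₂')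
    rcases (Ioo_disjoint_Ioo_iff_le_or_le h₁ h₁').1 hdisj with hb | hb
    · exact Or.inl ⟨hb, h.snd_le_of_fst_le h₁ h₂ h₁' h₂' hb⟩
    · exact Or.inr ⟨hb, h.symm.snd_le_of_fst_le h₁' h₂' h₁ h₂ hb⟩
  · rintro (⟨hA, hB⟩ | ⟨hA, hB⟩)
    · exact SpacelikeSeparated.of_le hA hB
    · exact (SpacelikeSeparated.of_le hA hB).symm
end

section
/- Let G and H be groups, t : H →* G a group homomorphism, and α : G →* MulAut H an action of G on H by automorphisms satisfying the crossed-module identities: t (α g h) = g * t h * g⁻¹ for all g ∈ G, h ∈ H, and α (t h) h' = h * h' * h⁻¹ for all h, h' ∈ H. Let k be a field, A a k-algebra, π : H →* Aˣ a group homomorphism into the units of A, and σ : G →* (A ≃ₐ[k] A) a group homomorphism into the k-algebra automorphisms of A, such that (a) σ (t h) a = ↑(π h) * a * ↑(π h)⁻¹ for all h ∈ H and a ∈ A, and (b) σ g ↑(π h) = ↑(π (α g h)) for all g ∈ G, h ∈ H. Then: (i) for all g ∈ G, h ∈ H, a ∈ A, ↑(π h) * σ g a = σ (t h * g) a * ↑(π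 h) (each π h is an intertwiner from the algebra homomorphism σ g to σ (t h * g)); and (ii) for all g₂ ∈ G and h₁, h₂ ∈ H, ↑(π (h₂ * α g₂ h₁)) = ↑(π h₂) * σ g₂ ↑(π h₁) (the assignment respects horizontal composition of 2-cells). -/
theorem AlgEquiv.units_mul_apply_eq_mul_apply_mul {R A : Type*} [CommSemiring R] [Semiring A]
    [Algebra R A] {e : A ≃ₐ[R] A} (u : Aˣ) (he : ∀ a, e a = u * a * ↑u⁻¹)
    (f : A ≃ₐ[R] A) (a : A) : (u : A) * f a = (e * f) a * u := by
  rw [AlgEquiv.mul_apply, he, Units.inv_mul_cancel_right]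

theorem crossedModule_canonical_two_representation_general
    (G H : Type*) [Group G] [Group H] (t : H →* G) (α : G →* MulAut H)
    (k : Type*) [Field k] (A : Type*) [Ring A] [Algebra k A]
    (π : H →* Aˣ) (σ : G →* (A ≃ₐ[k] A))
    (ha : ∀ (h : H) (a : A), σ (t h) a = (π h : A) * a * ((π h)⁻¹ : Aˣ))
    (hb : ∀ (g : G) (h : H), σ g (π h : A) = (π (α g h) : A)) :
    (∀ (g : G) (h : H) (a : A),
      (π h : A) * σ g a = σ (t h * g) a * (π h : A)) ∧
    (∀ (g₂ : G) (h₁ h₂ : H),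
      (π (h₂ * α g₂ h₁) : A) = (π h₂ : A) * σ g₂ (π h₁ : A)) := by
  refine ⟨fun g h a => ?_, fun g₂ h₁ h₂ => ?_⟩
  · rw [map_mul]
    exact AlgEquiv.units_mul_apply_eq_mul_apply_mul (π h) (ha h) (σ g) a
  · rw [hb, map_mul, Units.val_mul]

/-- Let `(t : H →* G, α : G →* MulAut H)` be a crossed module, and let
`π : H →* Aˣ` and `σ : G →* (A ≃ₐ[k] A)` satisfy (a) `σ (t h) = π h * · * (π h)⁻¹` and
(b) `σ g (π h) = π (α g h)`. Then (i) each `π h` intertwines `σ g` and `σ (t h * g)`, and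
(ii) the assignment respects horizontal composition of 2-cells:
`π (h₂ * α g₂ h₁) = π h₂ * σ g₂ (π h₁)`. These are the conditions making `g ↦ σ g`,
`h ↦ π h` a strict 2-functor from the 2-group of the crossed module to the 2-category of
algebras (the canonical 2-representation). -/
theorem crossedModule_canonical_two_representation
    (G H : Type*) [Group G] [Group H] (t : H →* G) (α : G →* MulAut H)
    (hpeiffer₁ : ∀ (g : G) (h : H), t (α g h) = g * t h * g⁻¹)
    (hpeiffer₂ : ∀ h h' : H, α (t h) h' = h * h' * h⁻¹)
    (k : Type*) [Field k] (A : Type*) [Ring A] [Algebra k A]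
    (π : H →* Aˣ) (σ : G →* (A ≃ₐ[k] A))
    (ha : ∀ (h : H) (a : A), σ (t h) a = (π h : A) * a * ((π h)⁻¹ : Aˣ))
    (hb : ∀ (g : G) (h : H), σ g (π h : A) = (π (α g h) : A)) :
    (∀ (g : G) (h : H) (a : A),
      (π h : A) * σ g a = σ (t h * g) a * (π h : A)) ∧
    (∀ (g₂ : G) (h₁ h₂ : H),
      (π (h₂ * α g₂ h₁) : A) = (π h₂ : A) * σ g₂ (π h₁ : A)) :=
  crossedModule_canonical_two_representation_general G H t α k A π σ ha hb
end
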